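/- Let $K$ be a group acting linearly on a $k$-vector space $V$ with a fixed direct sum decomposition $V = U \oplus \widetilde{U}$. Then the following are equivalent: (A) every $K$-submodule of $V$ contained in $U$ has a $K$-stable complement in $V$ containing $\widetilde{U}$, and every $K$-submodule of $V$ containing $\widetilde{U}$ has a $K$-stable complement in $V$ contained in $U$; (B) $\sigma_K(U)$ is a semisimple $K$-module and $V = \sigma_K(U) \oplus \iota_K(\widetilde{U})$. -/
import Mathlib


variable (k : Type*) [Field k] (V : Type*) [AddCommGroup V] [Module k V]
  (K : Type*) [Group K] [DistribMulAction K V] [SMulCommClass K k V]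

/-- A subspace of `V` is `K`-stable (a `K`-submodule) if it is closed under the action. -/
def IsKStable (p : Submodule k V) : Prop := ∀ (g : K) (v : V), v ∈ p → g • v ∈ p

/-- `σ_K(U)`: the sum of all `K`-submodules of `V` contained in `U`. -/
def sigmaK (U : Submodule k V) : Submodule k V :=
  sSup {p : Submodule k V | IsKStable k V K p ∧ p ≤ U}

/-- `ι_K(U)`: the intersection of all `K`-submodules of `V` containing `U`. -/
def iotaK (U : Submodule k V) : Submodule k V :=
  sInf {p : Submodule k V | IsKStable k V K p ∧ U ≤ p}

/-- A `K`-submodule `N` of `V` is a semisimple `K`-module: every `K`-submodule of `V`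
contained in `N` has a `K`-stable complement within `N`. -/
def IsKSemisimpleOn (N : Submodule k V) : Prop :=
  ∀ W : Submodule k V, IsKStable k V K W → W ≤ N →
    ∃ W' : Submodule k V, IsKStable k V K W' ∧ W' ≤ N ∧ W ⊓ W' = ⊥ ∧ W ⊔ W' = N

lemma isKStable_sSup {S : Set (Submodule k V)} (hS : ∀ p ∈ S, IsKStable k V K p) :
    IsKStable k V K (sSup S) := by
  intro g v hv
  have h : (sSup S).map (DistribMulAction.toLinearMap k V g) ≤ sSup S := by
    rw [sSup_eq_iSup, Submodule.map_iSup]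
    refine iSup_mono fun p => ?_
    simp only [Submodule.map_iSup]
    refine iSup_mono fun hp => ?_
    rintro x ⟨y, hy, rfl⟩
    exact hS p hp g y hy
  exact h ⟨v, hv, rfl⟩

lemma isKStable_sup {p q : Submodule k V} (hp : IsKStable k V K p) (hq : IsKStable k V K q) :
    IsKStable k V K (p ⊔ q) := by
  intro g v hv
  rw [Submodule.mem_sup] at hv ⊢
  obtain ⟨a, ha, b, hb, rfl⟩ := hv
  exact ⟨g • a, hp g a ha, g • b, hq g b hb, (smul_add g a b).symm⟩

lemma isKStable_inf {p q : Submodule k V} (hp : IsKStable k V K p) (hq : IsKStable k V K q) :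
    IsKStable k V K (p ⊓ q) :=
  fun g v hv => ⟨hp g v hv.1, hq g v hv.2⟩

lemma isKStable_sigmaK (U : Submodule k V) : IsKStable k V K (sigmaK k V K U) :=
  isKStable_sSup k V K fun _ hp => hp.1

lemma sigmaK_le (U : Submodule k V) : sigmaK k V K U ≤ U :=
  sSup_le fun _ hp => hp.2

lemma le_sigmaK {U W : Submodule k V} (h1 : IsKStable k V K W) (h2 : W ≤ U) :
    W ≤ sigmaK k V K U := le_sSup ⟨h1, h2⟩

lemma isKStable_iotaK (U : Submodule k V) : IsKStable k V K (iotaK k V K U) := by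
  intro g v hv
  rw [iotaK, Submodule.mem_sInf] at hv ⊢
  exact fun p hp => hp.1 g v (hv p hp)

lemma le_iotaK (U : Submodule k V) : U ≤ iotaK k V K U :=
  le_sInf fun _ hp => hp.2

lemma iotaK_le {U W : Submodule k V} (h1 : IsKStable k V K W) (h2 : U ≤ W) :
    iotaK k V K U ≤ W := sInf_le ⟨h1, h2⟩

/-- Given `V = U ⊕ Ũ`, the following are equivalent:
(A) every `K`-submodule of `V` contained in `U` has a `K`-stable complement containing `Ũ`,
and every `K`-submodule of `V` containing `Ũ` has a `K`-stable complement contained in `U`;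
(B) `σ_K(U)` is a semisimple `K`-module and `V = σ_K(U) ⊕ ι_K(Ũ)`. -/
theorem stmt_11 (U Ut : Submodule k V) (hUV : IsCompl U Ut) :
    ((∀ W : Submodule k V, IsKStable k V K W → W ≤ U →
        ∃ W' : Submodule k V, IsKStable k V K W' ∧ IsCompl W W' ∧ Ut ≤ W') ∧
     (∀ W : Submodule k V, IsKStable k V K W → Ut ≤ W →
        ∃ W' : Submodule k V, IsKStable k V K W' ∧ IsCompl W W' ∧ W' ≤ U)) ↔
    (IsKSemisimpleOn k V K (sigmaK k V K U) ∧
      IsCompl (sigmaK k V K U) (iotaK k V K Ut)) := by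
  set σ := sigmaK k V K U with hσdef
  set ι := iotaK k V K Ut with hιdef
  have hσst : IsKStable k V K σ := isKStable_sigmaK k V K U
  have hσU : σ ≤ U := sigmaK_le k V K U
  have hιst : IsKStable k V K ι := isKStable_iotaK k V K Ut
  have hUtι : Ut ≤ ι := le_iotaK k V K Ut
  constructor
  · rintro ⟨hA1, hA2⟩
    obtain ⟨W', hW'st, hcompl, hUtW'⟩ := hA1 σ hσst hσU
    obtain ⟨W'', hW''st, hcompl2, hW''U⟩ := hA2 ι hιst hUtι
    have hιW' : ι ≤ W' := iotaK_le k V K hW'st hUtW'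
    have hW''σ : W'' ≤ σ := le_sigmaK k V K hW''st hW''U
    refine ⟨?_, ?_⟩
    · intro W hWst hWσ
      obtain ⟨W₁, h1st, h1compl, hUt1⟩ := hA1 W hWst (hWσ.trans hσU)
      refine ⟨W₁ ⊓ σ, isKStable_inf k V K h1st hσst, inf_le_right, ?_, ?_⟩
      · rw [← inf_assoc, disjoint_iff.mp h1compl.disjoint, bot_inf_eq]
      · rw [← sup_inf_assoc_of_le _ hWσ, codisjoint_iff.mp h1compl.codisjoint, top_inf_eq]
    · constructor
      · rw [disjoint_iff]
        have : σ ⊓ ι ≤ σ ⊓ W' := inf_le_inf_left σ hιW'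
        rw [disjoint_iff.mp hcompl.disjoint] at this
        exact le_bot_iff.mp this
      · rw [codisjoint_iff]
        have : ι ⊔ W'' ≤ σ ⊔ ι := sup_le (le_sup_right) (hW''σ.trans le_sup_left)
        rw [codisjoint_iff.mp hcompl2.codisjoint] at this
        exact top_le_iff.mp this
  · rintro ⟨hss, hc⟩
    have hσι_inf : σ ⊓ ι = ⊥ := disjoint_iff.mp hc.disjoint
    have hσι_sup : σ ⊔ ι = ⊤ := codisjoint_iff.mp hc.codisjoint
    constructor
    · intro W hWst hWU
      have hWσ : W ≤ σ := le_sigmaK k V K hWst hWU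
      obtain ⟨C, hCst, hCσ, hinf, hsup⟩ := hss W hWst hWσ
      refine ⟨C ⊔ ι, isKStable_sup k V K hCst hιst, ?_, hUtι.trans le_sup_right⟩
      constructor
      · rw [disjoint_iff]
        have hισ : ι ⊓ σ = ⊥ := by rw [inf_comm]; exact hσι_inf
        have hmod : σ ⊓ (C ⊔ ι) = C := by
          rw [inf_comm, sup_inf_assoc_of_le _ hCσ, hισ, sup_bot_eq]
        calc W ⊓ (C ⊔ ι) = W ⊓ (σ ⊓ (C ⊔ ι)) := by
              rw [← inf_assoc, inf_eq_left.mpr hWσ]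
          _ = W ⊓ C := by rw [hmod]
          _ = ⊥ := hinf
      · rw [codisjoint_iff, ← sup_assoc, hsup, hσι_sup]
    · intro W hWst hUtW
      have hιW : ι ≤ W := iotaK_le k V K hWst hUtW
      obtain ⟨C, hCst, hCσ, hinf, hsup⟩ :=
        hss (W ⊓ σ) (isKStable_inf k V K hWst hσst) inf_le_right
      refine ⟨C, hCst, ?_, hCσ.trans hσU⟩
      constructor
      · rw [disjoint_iff]
        calc W ⊓ C = W ⊓ (σ ⊓ C) := by rw [inf_eq_right.mpr hCσ]
          _ = (W ⊓ σ) ⊓ C := by rw [inf_assoc]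
          _ = ⊥ := hinf
      · rw [codisjoint_iff]
        have h1 : σ ≤ W ⊔ C := by
          rw [← hsup]; exact sup_le_sup_right inf_le_left C
        have h2 : ι ≤ W ⊔ C := hιW.trans le_sup_left
        have : σ ⊔ ι ≤ W ⊔ C := sup_le h1 h2
        rw [hσι_sup] at this
        exact top_le_iff.mp this
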